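/- arXiv:2106.06095 — 4 statements merged into one kernel-verified Lean document; each statement's English description precedes it below -/
import Mathlib

section
/- Let q ∈ ℝ and s > 0, and define l(γ) = (1/2)( q²γ/(1+γs) − log(1+γs) ) for γ ≥ 0. If q² > s, then l has a unique maximizer on [0,∞), namely γ* = (q² − s)/s², i.e. l(γ*) > l(γ) for all γ ≥ 0 with γ ≠ γ*. If q² ≤ s, then γ = 0 is a maximizer of l on [0,∞), and it is the unique maximizer when q² < s. -/
private lemma sbl_aux1 (a u : ℝ) (ha : 0 < a) (hu : 0 < u) (hne : u ≠ a) :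
    a - a / u - Real.log u < a - 1 - Real.log a := by
  have hx : (0:ℝ) < a / u := div_pos ha hu
  have hx1 : a / u ≠ 1 := by
    intro h
    exact hne ((div_eq_one_iff_eq hu.ne').mp h).symm
  have h := Real.log_lt_sub_one_of_pos hx hx1
  rw [Real.log_div ha.ne' hu.ne'] at h
  linarith

private lemma sbl_aux2 (a u : ℝ) (ha : a ≤ 1) (hu : 1 ≤ u) :
    a - a / u - Real.log u ≤ 0 := by
  have hu0 : (0:ℝ) < u := lt_of_lt_of_le one_pos hu
  have hlog : Real.log (1 / u) ≤ 1 / u - 1 :=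
    Real.log_le_sub_one_of_pos (by positivity)
  rw [Real.log_div one_ne_zero hu0.ne', Real.log_one] at hlog
  have h1 : 0 ≤ 1 - 1 / u := by
    have : 1 / u ≤ 1 := by
      rw [div_le_one hu0]; exact hu
    linarith
  have h2 : a - a / u = a * (1 - 1 / u) := by ring
  nlinarith

private lemma sbl_aux3 (a u : ℝ) (ha : a < 1) (hu : 1 < u) :
    a - a / u - Real.log u < 0 := by
  have hu0 : (0:ℝ) < u := lt_trans one_pos hu
  have hlog : Real.log (1 / u) ≤ 1 / u - 1 :=
    Real.log_le_sub_one_of_pos (by positivity)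
  rw [Real.log_div one_ne_zero hu0.ne', Real.log_one] at hlog
  have h1 : 0 < 1 - 1 / u := by
    have : 1 / u < 1 := by
      rw [div_lt_one hu0]; exact hu
    linarith
  have h2 : a - a / u = a * (1 - 1 / u) := by ring
  nlinarith

/-- closed-form coordinate-wise maximizer of the SBL marginal-likelihood
contribution `l(γ) = (1/2)(q²γ/(1+γs) − log(1+γs))` on `[0,∞)`. -/
theorem sbl_coordinate_maximizer (q s : ℝ) (hs : 0 < s) :
    let l : ℝ → ℝ := fun γ => (1/2) * (q^2 * γ / (1 + γ * s) - Real.log (1 + γ * s))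
    (q^2 > s → ∀ γ : ℝ, 0 ≤ γ → γ ≠ (q^2 - s) / s^2 → l γ < l ((q^2 - s) / s^2)) ∧
    (q^2 ≤ s → ∀ γ : ℝ, 0 ≤ γ → l γ ≤ l 0) ∧
    (q^2 < s → ∀ γ : ℝ, 0 < γ → l γ < l 0) := by
  intro l
  set a : ℝ := q^2 / s with ha_def
  have hl : ∀ γ : ℝ, 0 ≤ γ → l γ = (1/2) * (a - a / (1 + γ * s) - Real.log (1 + γ * s)) := by
    intro γ hγ
    have hu : (0:ℝ) < 1 + γ * s := by positivity
    have : q^2 * γ / (1 + γ * s) = a - a / (1 + γ * s) := by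
      rw [ha_def]
      field_simp
      ring
    simp only [l, this]
  have hl0 : l 0 = 0 := by simp [l]
  refine ⟨?_, ?_, ?_⟩
  · intro hqs γ hγ hne
    have ha1 : 1 < a := (one_lt_div hs).mpr hqs
    have hγs : (0:ℝ) < s^2 := by positivity
    have hgstar : (0:ℝ) ≤ (q^2 - s) / s^2 := by
      apply div_nonneg (by linarith) (le_of_lt hγs)
    have hustar : 1 + ((q^2 - s) / s^2) * s = a := by
      rw [ha_def]; field_simp; ring
    have hune : 1 + γ * s ≠ a := by
      intro h
      apply hne
      rw [← hustar] at h
      have := hs.ne'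
      field_simp at h ⊢
      nlinarith [h]
    rw [hl γ hγ, hl _ hgstar, hustar]
    have hu : (0:ℝ) < 1 + γ * s := by positivity
    have := sbl_aux1 a (1 + γ * s) (by linarith) hu hune
    have : a - a / a - Real.log a = a - 1 - Real.log a := by
      rw [div_self (by linarith : a ≠ 0)]
    linarith [sbl_aux1 a (1 + γ * s) (by linarith) hu hune, this]
  · intro hqs γ hγ
    rw [hl γ hγ, hl0]
    have ha1 : a ≤ 1 := (div_le_one hs).mpr hqs
    have hu : (1:ℝ) ≤ 1 + γ * s := by nlinarith
    have := sbl_aux2 a (1 + γ * s) ha1 hu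
    linarith
  · intro hqs γ hγ
    rw [hl γ (le_of_lt hγ), hl0]
    have ha1 : a < 1 := (div_lt_one hs).mpr hqs
    have hu : (1:ℝ) < 1 + γ * s := by nlinarith
    have := sbl_aux3 a (1 + γ * s) ha1 hu
    linarith
end

section
/- Let σ > 0, let A be a finite index set, let φ_k ∈ ℝⁿ and γ_k ≥ 0 for k ∈ A, set B = Σ_{k∈A} γ_k φ_kφ_kᵀ, C = σ²Iₙ + B, R = σ²C⁻¹, and let y ∈ ℝⁿ. For each index i ∉ A with φ_i ≠ 0, define q_i = φ_iᵀC⁻¹y, s_i = φ_iᵀC⁻¹φ_i, and Δ_add(i) = max_{γ≥0} (1/2)( q_i²γ/(1+γs_i) − log(1+γs_i) ). Then every index i ∉ A maximizing |φ_iᵀ R y| / √(φ_iᵀ R φ_i) over i ∉ A also maximizes Δ_add(i) over i ∉ A. -/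
/-!
Both criteria see a feature only through `q = φᵀC⁻¹y` and `s = φᵀC⁻¹φ > 0` (positive because
`C` is positive definite). The matching-pursuit score is `σ|q|/√s`, and the best achievable gain
`Δ_add` is monotone in `q²/s`: substituting `γ ↦ γ s'/s` aligns the logarithmic terms of two
features, so a larger `q²/s` wins pointwise.
-/

open Matrix Set

theorem Matrix.posDef_smul_one_add_sum_smul_vecMulVec {n ι : Type*} [Fintype n] [DecidableEq n]
    {c : ℝ} (hc : 0 < c) (A : Finset ι) (φ : ι → n → ℝ) (γ : ι → ℝ)
    (hγ : ∀ k ∈ A, 0 ≤ γ k) :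
    (c • (1 : Matrix n n ℝ) + ∑ k ∈ A, γ k • vecMulVec (φ k) (φ k)).PosDef :=
  (PosDef.one.smul hc).add_posSemidef <| posSemidef_sum A fun k hk => by
    simpa using (posSemidef_vecMulVec_self_star (φ k)).smul (hγ k hk)

theorem abs_mul_div_sqrt_mul {c : ℝ} (hc : 0 < c) (a b : ℝ) :
    |c * a| / √(c * b) = √c * (|a| / √b) := by
  have hc' : √c ≠ 0 := (Real.sqrt_pos.mpr hc).ne'
  have hcc : c * |a| = √c * (√c * |a|) := by rw [← mul_assoc, Real.mul_self_sqrt hc.le]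
  rw [abs_mul, abs_of_pos hc, Real.sqrt_mul hc.le, hcc, mul_div_mul_left _ _ hc', mul_div_assoc]

theorem sq_mul_le_sq_mul_of_abs_div_sqrt_le {q s q' s' : ℝ} (hs : 0 < s) (hs' : 0 < s')
    (h : |q'| / √s' ≤ |q| / √s) : q' ^ 2 * s ≤ q ^ 2 * s' := by
  have hsq := pow_le_pow_left₀ (by positivity) h 2
  rw [div_pow, div_pow, sq_abs, sq_abs, Real.sq_sqrt hs.le, Real.sq_sqrt hs'.le,
    div_le_div_iff₀ hs' hs] at hsq
  exact hsq

/-- The gain in marginal log-likelihood from activating a feature with `q = φᵀC⁻¹y`,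
`s = φᵀC⁻¹φ` at prior variance `γ`. -/
noncomputable def addGain (q s γ : ℝ) : ℝ :=
  1 / 2 * (q ^ 2 * γ / (1 + γ * s) - Real.log (1 + γ * s))

theorem addGain_le {q s γ : ℝ} (hs : 0 < s) (hγ : 0 ≤ γ) : addGain q s γ ≤ q ^ 2 / (2 * s) := by
  have hu : 0 < 1 + γ * s := by positivity
  have hlog : 0 ≤ Real.log (1 + γ * s) := Real.log_nonneg (by nlinarith)
  have hfrac : q ^ 2 * γ / (1 + γ * s) ≤ q ^ 2 / s := by
    rw [div_le_div_iff₀ hu hs]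
    nlinarith [sq_nonneg q]
  rw [addGain, div_mul_eq_div_div_swap]
  linarith

theorem bddAbove_addGain (q : ℝ) {s : ℝ} (hs : 0 < s) : BddAbove (addGain q s '' Ici 0) :=
  ⟨q ^ 2 / (2 * s), by rintro _ ⟨γ, hγ, rfl⟩; exact addGain_le hs hγ⟩

/-- Rescaling `γ` by `s' / s` matches the logarithmic terms, leaving only the numerators to
compare. -/
theorem addGain_le_addGain_mul_div {q s q' s' γ : ℝ} (hs : 0 < s) (hs' : 0 < s')
    (h : q' ^ 2 * s ≤ q ^ 2 * s') (hγ : 0 ≤ γ) :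
    addGain q' s' γ ≤ addGain q s (γ * s' / s) := by
  have hlog : 1 + γ * s' / s * s = 1 + γ * s' := by rw [div_mul_cancel₀ _ hs.ne']
  have hnum : q' ^ 2 * γ ≤ q ^ 2 * (γ * s' / s) := by
    rw [← mul_div_assoc, le_div_iff₀ hs]
    nlinarith
  unfold addGain
  rw [hlog]
  gcongr

theorem sSup_addGain_le_sSup_addGain {q s q' s' : ℝ} (hs : 0 < s) (hs' : 0 < s')
    (h : q' ^ 2 * s ≤ q ^ 2 * s') :
    sSup (addGain q' s' '' Ici 0) ≤ sSup (addGain q s '' Ici 0) := by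
  refine csSup_le (nonempty_Ici.image _) ?_
  rintro _ ⟨γ, hγ : 0 ≤ γ, rfl⟩
  exact (addGain_le_addGain_mul_div hs hs' h hγ).trans <|
    le_csSup (bddAbove_addGain q hs) ⟨_, mem_Ici.mpr (by positivity), rfl⟩

/-- Lemma 2 of the paper: with `C = σ²I + Σ_{k∈A} γ_k φ_kφ_kᵀ`, `R = σ²C⁻¹`,
`Δ_add(i) = max_{γ≥0} (1/2)(q_i²γ/(1+γs_i) − log(1+γs_i))`, every inactive index maximizing
`|φ_iᵀRy|/√(φ_iᵀRφ_i)` over `i ∉ A` also maximizes `Δ_add(i)` over `i ∉ A`. -/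
theorem sbl_acquisition_matching_pursuit {n m : ℕ} (σ : ℝ) (hσ : 0 < σ)
    (A : Finset (Fin m)) (φ : Fin m → Fin n → ℝ) (γv : Fin m → ℝ)
    (hγ : ∀ k ∈ A, 0 ≤ γv k) (y : Fin n → ℝ) (hφ : ∀ i ∉ A, φ i ≠ 0) :
    let B : Matrix (Fin n) (Fin n) ℝ := ∑ k ∈ A, γv k • vecMulVec (φ k) (φ k)
    let C : Matrix (Fin n) (Fin n) ℝ := σ^2 • (1 : Matrix (Fin n) (Fin n) ℝ) + B
    let R : Matrix (Fin n) (Fin n) ℝ := σ^2 • C⁻¹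
    let q : Fin m → ℝ := fun i => φ i ⬝ᵥ (C⁻¹ *ᵥ y)
    let s : Fin m → ℝ := fun i => φ i ⬝ᵥ (C⁻¹ *ᵥ φ i)
    let Δadd : Fin m → ℝ := fun i =>
      sSup ((fun γ : ℝ => (1/2) * ((q i)^2 * γ / (1 + γ * s i) - Real.log (1 + γ * s i))) ''
        Set.Ici 0)
    let crit : Fin m → ℝ := fun i => |φ i ⬝ᵥ (R *ᵥ y)| / Real.sqrt (φ i ⬝ᵥ (R *ᵥ φ i))
    ∀ i ∉ A, (∀ j ∉ A, crit j ≤ crit i) → ∀ j ∉ A, Δadd j ≤ Δadd i := by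
  intro B C R q s Δadd crit i hi hmax j hj
  have hC : C.PosDef := posDef_smul_one_add_sum_smul_vecMulVec (by positivity) A φ γv hγ
  have hs : ∀ k ∉ A, 0 < s k := fun k hk => by
    simpa using hC.inv.dotProduct_mulVec_pos (hφ k hk)
  have hcrit : ∀ k, crit k = σ * (|q k| / √(s k)) := fun k => by
    simp only [crit, R, smul_mulVec, dotProduct_smul, smul_eq_mul]
    rw [abs_mul_div_sqrt_mul (by positivity), Real.sqrt_sq hσ.le]
  have hratio : |q j| / √(s j) ≤ |q i| / √(s i) :=
    le_of_mul_le_mul_left (by simpa only [hcrit] using hmax j hj) hσ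
  exact sSup_addGain_le_sSup_addGain (hs i hi) (hs j hj)
    (sq_mul_le_sq_mul_of_abs_div_sqrt_le (hs i hi) (hs j hj) hratio)
end

section
/- Let φ_1,…,φ_m ∈ ℝⁿ and y ∈ ℝⁿ; for A ⊆ {1,…,m} let P_A denote the orthogonal projection of ℝⁿ onto span{φ_j : j ∈ A} and r_A = y − P_A y. (a) If φ_i ∉ span{φ_j : j ∈ A} for every i ∉ A, then an index i ∉ A minimizes ‖r_{A∪{i}}‖₂ over i ∉ A if and only if it maximizes |⟨φ_i, r_A⟩| / ‖(Iₙ − P_A)φ_i‖₂ over i ∉ A. (b) If φ_i ∉ span{φ_j : j ∈ A∖{i}} for every i ∈ A, then an index i ∈ A minimizes ‖r_{A∖{i}}‖₂ over i ∈ A if and only if it minimizes |⟨φ_i, r_{A∖{i}}⟩| / ‖(Iₙ − P_{A∖{i}})φ_i‖₂ over i ∈ A. -/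
/-!
Adjoining `v` to a subspace `K` adds to `P_K` the projection onto the line spanned by the
Gram–Schmidt vector `u = (I − P_K) v`, which is orthogonal to `K`. By Pythagoras the squared
residual therefore drops by `⟪u, r_K⟫² / ‖u‖² = ⟪v, r_K⟫² / ‖(I − P_K) v‖²`. So all candidate
steps from `A` share the same `‖r_A‖²` minus (forward) or plus (backward, applied to `A ∖ {i}`)
the square of the normalized correlation, and comparing residual norms is comparing those.
-/

/-- The least-squares residual `r_A = y − P_A y`, where `P_A` is the orthogonal projection
onto `span{φ_j : j ∈ A}`. -/
noncomputable def lsResidual {n m : ℕ} (φ : Fin m → EuclideanSpace ℝ (Fin n))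
    (y : EuclideanSpace ℝ (Fin n)) (A : Finset (Fin m)) : EuclideanSpace ℝ (Fin n) :=
  y - (Submodule.orthogonalProjectionOnto (Submodule.span ℝ (φ '' (A : Set (Fin m)))) y :
    EuclideanSpace ℝ (Fin n))

theorem le_iff_le_of_sq_add_sq_eq {a b s t : ℝ} (ha : 0 ≤ a) (hb : 0 ≤ b) (hs : 0 ≤ s)
    (ht : 0 ≤ t) (h : a ^ 2 + s ^ 2 = b ^ 2 + t ^ 2) : a ≤ b ↔ t ≤ s := by
  rw [← pow_le_pow_iff_left₀ ha hb two_ne_zero, ← pow_le_pow_iff_left₀ ht hs two_ne_zero]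
  constructor <;> intro <;> linarith

namespace Submodule

variable {E : Type*} [NormedAddCommGroup E] [InnerProductSpace ℝ E]
  (K : Submodule ℝ E) [K.HasOrthogonalProjection]

theorem sub_starProjection_sup_span_singleton (v y : E)
    [(K ⊔ span ℝ {v}).HasOrthogonalProjection] :
    y - (K ⊔ span ℝ {v}).starProjection y =
      (y - K.starProjection y) -
        (span ℝ {v - K.starProjection v}).starProjection (y - K.starProjection y) := by
  set r := y - K.starProjection y
  set u := v - K.starProjection v
  set L := span ℝ {u}
  have hu : u ∈ Kᗮ := K.sub_starProjection_mem_orthogonal v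
  have hres : r - L.starProjection r ∈ Kᗮ := by
    refine Kᗮ.sub_mem (K.sub_starProjection_mem_orthogonal y) ?_
    rw [starProjection_singleton]
    exact Kᗮ.smul_mem _ hu
  suffices (K ⊔ span ℝ {v}).starProjection y = K.starProjection y + L.starProjection r by
    rw [this, sub_add_eq_sub_sub]
  refine eq_starProjection_of_mem_of_inner_eq_zero ?_ fun w hw => ?_
  · refine add_mem (mem_sup_left (K.starProjection_apply_mem y)) ?_
    rw [starProjection_singleton]
    exact smul_mem _ _ <| sub_mem (mem_sup_right (mem_span_singleton_self v))
      (mem_sup_left (K.starProjection_apply_mem v))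
  · obtain ⟨k, hk, t, ht, rfl⟩ := mem_sup.mp hw
    obtain ⟨a, rfl⟩ := mem_span_singleton.mp ht
    have hv : v = u + K.starProjection v := (sub_add_cancel _ _).symm
    rw [sub_add_eq_sub_sub]
    change inner ℝ (r - L.starProjection r) (k + a • v) = 0
    rw [inner_add_right, inner_smul_right, hv, inner_add_right,
      inner_left_of_mem_orthogonal hk hres,
      inner_left_of_mem_orthogonal (K.starProjection_apply_mem v) hres,
      L.starProjection_inner_eq_zero r u (mem_span_singleton_self u)]
    simp

theorem norm_sub_starProjection_span_singleton_sq (u r : E) :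
    ‖r - (span ℝ {u}).starProjection r‖ ^ 2 = ‖r‖ ^ 2 - (|inner ℝ u r| / ‖u‖) ^ 2 := by
  have h := norm_sq_eq_add_norm_sq_starProjection r (span ℝ {u})
  rw [starProjection_orthogonal] at h
  have hP : ‖(span ℝ {u}).starProjection r‖ = |inner ℝ u r| / ‖u‖ := by
    rw [starProjection_singleton, norm_smul]
    rcases eq_or_ne ‖u‖ 0 with h0 | h0
    · simp [h0]
    · simp only [Real.ringHom_apply, norm_div, Real.norm_eq_abs, norm_pow, abs_norm]
      field_simp
  simp only [sub_apply, ContinuousLinearMap.id_apply] at h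
  rw [← hP]; linarith

-- For `v ∈ K` the correction term is the junk value `_ / 0 = 0`, correctly so since then
-- `K ⊔ span ℝ {v} = K`.
theorem norm_sub_starProjection_sup_span_singleton_sq (v y : E)
    [(K ⊔ span ℝ {v}).HasOrthogonalProjection] :
    ‖y - (K ⊔ span ℝ {v}).starProjection y‖ ^ 2 =
      ‖y - K.starProjection y‖ ^ 2 -
        (|inner ℝ v (y - K.starProjection y)| / ‖v - K.starProjection v‖) ^ 2 := by
  have h : inner ℝ (v - K.starProjection v) (y - K.starProjection y) =
      inner ℝ v (y - K.starProjection y) := by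
    rw [inner_sub_left, inner_right_of_mem_orthogonal (K.starProjection_apply_mem v)
      (K.sub_starProjection_mem_orthogonal y), sub_zero]
  rw [sub_starProjection_sup_span_singleton, norm_sub_starProjection_span_singleton_sq, h]

end Submodule

section lsResidual

variable {n m : ℕ} (φ : Fin m → EuclideanSpace ℝ (Fin n)) (y : EuclideanSpace ℝ (Fin n))

theorem norm_lsResidual_insert_sq (A : Finset (Fin m)) (i : Fin m) :
    ‖lsResidual φ y (insert i A)‖ ^ 2 =
      ‖lsResidual φ y A‖ ^ 2 -
        (|inner ℝ (φ i) (lsResidual φ y A)| / ‖lsResidual φ (φ i) A‖) ^ 2 := by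
  have hspan : Submodule.span ℝ (φ '' ↑(insert i A)) =
      Submodule.span ℝ (φ '' ↑A) ⊔ Submodule.span ℝ {φ i} := by
    rw [Finset.coe_insert, Set.image_insert_eq, Submodule.span_insert, sup_comm]
  have h := (Submodule.span ℝ (φ '' ↑A)).norm_sub_starProjection_sup_span_singleton_sq (φ i) y
  rwa [← Submodule.starProjection_inj.mpr hspan] at h

theorem norm_lsResidual_insert_le_iff (A : Finset (Fin m)) (i j : Fin m) :
    ‖lsResidual φ y (insert i A)‖ ≤ ‖lsResidual φ y (insert j A)‖ ↔
      |inner ℝ (φ j) (lsResidual φ y A)| / ‖lsResidual φ (φ j) A‖ ≤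
        |inner ℝ (φ i) (lsResidual φ y A)| / ‖lsResidual φ (φ i) A‖ := by
  refine le_iff_le_of_sq_add_sq_eq (norm_nonneg _) (norm_nonneg _) (by positivity)
    (by positivity) ?_
  rw [norm_lsResidual_insert_sq, norm_lsResidual_insert_sq]
  ring

theorem norm_lsResidual_erase_le_iff {A : Finset (Fin m)} {i j : Fin m} (hi : i ∈ A)
    (hj : j ∈ A) :
    ‖lsResidual φ y (A.erase i)‖ ≤ ‖lsResidual φ y (A.erase j)‖ ↔
      |inner ℝ (φ i) (lsResidual φ y (A.erase i))| / ‖lsResidual φ (φ i) (A.erase i)‖ ≤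
        |inner ℝ (φ j) (lsResidual φ y (A.erase j))| / ‖lsResidual φ (φ j) (A.erase j)‖ := by
  refine le_iff_le_of_sq_add_sq_eq (norm_nonneg _) (norm_nonneg _) (by positivity)
    (by positivity) ?_
  have hi' := norm_lsResidual_insert_sq φ y (A.erase i) i
  have hj' := norm_lsResidual_insert_sq φ y (A.erase j) j
  rw [Finset.insert_erase hi] at hi'
  rw [Finset.insert_erase hj] at hj'
  linarith

end lsResidual

/-- corollary of Lemma 5 of the paper: the forward and backward stepwise
selection rules coincide with the normalized-correlation rules;
note `(I − P_A)φ_i = lsResidual φ (φ i) A`. -/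
theorem stepwise_rules_equivalence {n m : ℕ} (φ : Fin m → EuclideanSpace ℝ (Fin n))
    (y : EuclideanSpace ℝ (Fin n)) (A : Finset (Fin m)) :
    ((∀ i ∉ A, φ i ∉ Submodule.span ℝ (φ '' (A : Set (Fin m)))) →
      ∀ i ∉ A,
        ((∀ j ∉ A, ‖lsResidual φ y (insert i A)‖ ≤ ‖lsResidual φ y (insert j A)‖) ↔
          (∀ j ∉ A,
            |(inner ℝ (φ j) (lsResidual φ y A) : ℝ)| / ‖lsResidual φ (φ j) A‖ ≤
              |(inner ℝ (φ i) (lsResidual φ y A) : ℝ)| / ‖lsResidual φ (φ i) A‖))) ∧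
    ((∀ i ∈ A, φ i ∉ Submodule.span ℝ (φ '' ((A.erase i) : Set (Fin m)))) →
      ∀ i ∈ A,
        ((∀ j ∈ A, ‖lsResidual φ y (A.erase i)‖ ≤ ‖lsResidual φ y (A.erase j)‖) ↔
          (∀ j ∈ A,
            |(inner ℝ (φ i) (lsResidual φ y (A.erase i)) : ℝ)| /
                ‖lsResidual φ (φ i) (A.erase i)‖ ≤
              |(inner ℝ (φ j) (lsResidual φ y (A.erase j)) : ℝ)| /
                ‖lsResidual φ (φ j) (A.erase j)‖))) := by
  refine ⟨fun _ i _ => forall₂_congr fun j _ => norm_lsResidual_insert_le_iff φ y A i j,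
    fun _ i hi => forall₂_congr fun j hj => norm_lsResidual_erase_le_iff φ y hi hj⟩
end

section
/- Let Φ be a real n×m matrix with full column rank whose columns φ_1,…,φ_m each have unit Euclidean norm, let x ∈ ℝ^m be k-sparse with support S, let ε ∈ ℝⁿ, and let y = Φx + ε. If (σ_min(Φ) / √(2(2 − σ_min(Φ)²))) · min_{i∈S} |x_i| > ‖ε‖₂, where σ_min(Φ) is the smallest singular value of Φ, then Backward Regression, started from the full active set {1,…,m} and run for m − k iterations on (Φ, y), terminates with active set exactly S, for every choice of tie-breaking. -/
/-- One step of Backward Regression: delete an active index minimizing `‖r_{A∖{i}}‖`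
(any tie-breaking). -/
def BRStep {n m : ℕ} (φ : Fin m → EuclideanSpace ℝ (Fin n))
    (y : EuclideanSpace ℝ (Fin n)) (A B : Finset (Fin m)) : Prop :=
  ∃ i ∈ A, B = A.erase i ∧
    ∀ j ∈ A, ‖lsResidual φ y (A.erase i)‖ ≤ ‖lsResidual φ y (A.erase j)‖

/-- The smallest singular value of the matrix with columns `φ j`,
`σ_min = inf {‖Σ_j v_j φ_j‖ : ‖v‖₂ = 1}`. -/
noncomputable def sigmaMin {n : ℕ} {ι : Type*} [Fintype ι]
    (φ : ι → EuclideanSpace ℝ (Fin n)) : ℝ :=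
  sInf {t : ℝ | ∃ v : EuclideanSpace ℝ ι, ‖v‖ = 1 ∧ t = ‖∑ j, v j • φ j‖}

/-!
Write `u_i` for the component of `φ_i` orthogonal to the other active columns and
`û_i = u_i / ‖u_i‖`. One Gram–Schmidt step shows that deleting `i` from `A` raises `‖r‖²` by
`⟨û_i, y⟩²`. Off the support this correlation only sees the noise, `⟨û_j, y⟩ = ⟨û_j, ε⟩`, while on
the support `⟨û_i, y⟩ = x_i ‖u_i‖ + ⟨û_i, ε⟩` with `‖u_i‖ ≥ σ_min`. Up to sign, `⟨û_i, û_j⟩` is the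
cosine between the residuals `p, q` of `φ_i, φ_j` against the remaining columns, and testing
`σ_min` on `‖q‖ p ± ‖p‖ q` (with `‖p‖, ‖q‖ ≤ 1`) gives `|⟨û_i, û_j⟩| ≤ 1 − σ_min²`. The Bessel-type
bound `⟨e, ε⟩² + ⟨f, ε⟩² ≤ (1 + |⟨e, f⟩|) ‖ε‖²` for unit vectors `e, f` then shows that under the
noise condition an index off the support always has the strictly smaller correlation, so every
step of Backward Regression deletes an index outside `S`.
-/

open Submodule
open scoped RealInnerProductSpace

section InnerProductSpace
variable {E : Type*} [NormedAddCommGroup E] [InnerProductSpace ℝ E]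

theorem starProjection_orthogonal_sup_span_singleton (K : Submodule ℝ E)
    [K.HasOrthogonalProjection] (v : E) [(K ⊔ ℝ ∙ v).HasOrthogonalProjection] (y : E) :
    (K ⊔ ℝ ∙ v)ᗮ.starProjection y =
      (ℝ ∙ Kᗮ.starProjection v)ᗮ.starProjection (Kᗮ.starProjection y) := by
  rw [starProjection_orthogonal_val (K := ℝ ∙ Kᗮ.starProjection v)]
  set u := Kᗮ.starProjection v
  set r := Kᗮ.starProjection y
  have hu : ℝ ∙ u ≤ Kᗮ := (span_singleton_le_iff_mem _ _).2 (starProjection_apply_mem _ _)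
  have hu' : ℝ ∙ u ≤ K ⊔ ℝ ∙ v := by
    rw [span_singleton_le_iff_mem, show u = v - K.starProjection v by simp [u]]
    exact sub_mem (mem_sup_right (mem_span_singleton_self v))
      (mem_sup_left (starProjection_apply_mem _ _))
  have hrK : r - (ℝ ∙ u).starProjection r ∈ Kᗮ :=
    sub_mem (starProjection_apply_mem _ _) (hu (starProjection_apply_mem _ _))
  have hru : r - (ℝ ∙ u).starProjection r ∈ (ℝ ∙ u)ᗮ := sub_starProjection_mem_orthogonal r
  refine eq_starProjection_of_mem_orthogonal' (v := r - (ℝ ∙ u).starProjection r)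
    (z := K.starProjection y + (ℝ ∙ u).starProjection r) ?_ ?_ ?_
  · rw [← inf_orthogonal]
    refine ⟨hrK, mem_orthogonal_singleton_iff_inner_right.2 ?_⟩
    have hv : v = u + K.starProjection v := by simp [u]
    rw [hv, inner_add_left, mem_orthogonal_singleton_iff_inner_right.1 hru,
      inner_right_of_mem_orthogonal (starProjection_apply_mem _ _) hrK, add_zero]
  · rw [orthogonal_orthogonal]
    exact add_mem (mem_sup_left (starProjection_apply_mem _ _))
      (hu' (starProjection_apply_mem _ _))
  · simp [r]

theorem abs_inner_starProjection_orthogonal_singleton (p q : E) :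
    |⟪(ℝ ∙ q)ᗮ.starProjection p, (ℝ ∙ p)ᗮ.starProjection q⟫| * (‖p‖ * ‖q‖) =
      |⟪p, q⟫| * (‖(ℝ ∙ q)ᗮ.starProjection p‖ * ‖(ℝ ∙ p)ᗮ.starProjection q‖) := by
  rw [← sq_eq_sq₀ (by positivity) (by positivity)]
  simp only [mul_pow, sq_abs]
  rcases eq_or_ne p 0 with rfl | hp
  · simp
  rcases eq_or_ne q 0 with rfl | hq
  · simp
  have ha : ‖p‖ ≠ 0 := norm_ne_zero_iff.2 hp
  have hb : ‖q‖ ≠ 0 := norm_ne_zero_iff.2 hq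
  simp only [starProjection_orthogonal_val, starProjection_singleton, norm_sub_sq_real,
    inner_sub_left, inner_sub_right, real_inner_smul_left, real_inner_smul_right, norm_smul,
    mul_pow, Real.norm_eq_abs, sq_abs, real_inner_self_eq_norm_sq, real_inner_comm p q,
    RCLike.ofReal_real_eq_id, id_eq]
  field_simp
  ring

theorem inner_sq_add_inner_sq_le {e f : E} (he : ‖e‖ = 1) (hf : ‖f‖ = 1) (z : E) :
    ⟪e, z⟫ ^ 2 + ⟪f, z⟫ ^ 2 ≤ (1 + |⟪e, f⟫|) * ‖z‖ ^ 2 := by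
  set a := ⟪e, z⟫
  set b := ⟪f, z⟫
  set w := a • e + b • f
  have hwz : ⟪w, z⟫ = a ^ 2 + b ^ 2 := by
    simp only [w, inner_add_left, real_inner_smul_left]; ring
  have hw : ‖w‖ ^ 2 ≤ (1 + |⟪e, f⟫|) * (a ^ 2 + b ^ 2) := by
    have h2ab : 2 * a * b * ⟪e, f⟫ ≤ (a ^ 2 + b ^ 2) * |⟪e, f⟫| := by
      nlinarith [neg_abs_le ⟪e, f⟫, le_abs_self ⟪e, f⟫, sq_nonneg (a - b), sq_nonneg (a + b),
        abs_nonneg ⟪e, f⟫]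
    have : ‖w‖ ^ 2 = a ^ 2 + b ^ 2 + 2 * a * b * ⟪e, f⟫ := by
      simp only [w, norm_add_sq_real, norm_smul, real_inner_smul_left, real_inner_smul_right,
        mul_pow, Real.norm_eq_abs, sq_abs, he, hf]
      ring
    linarith
  have hcs : ⟪w, z⟫ ^ 2 ≤ ‖w‖ ^ 2 * ‖z‖ ^ 2 := by
    rw [← mul_pow]; exact sq_le_sq' (neg_le_of_abs_le (abs_real_inner_le_norm w z))
      (le_of_abs_le (abs_real_inner_le_norm w z))
  rw [hwz] at hcs
  rcases (add_nonneg (sq_nonneg a) (sq_nonneg b)).eq_or_lt with h0 | hpos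
  · rw [← h0]; positivity
  · nlinarith [mul_le_mul_of_nonneg_right hw (sq_nonneg ‖z‖)]

theorem sq_inner_lt_sq_add_inner {e f : E} (he : ‖e‖ = 1) (hf : ‖f‖ = 1) {z : E} {D : ℝ}
    (hD : 2 * (1 + |⟪e, f⟫|) * ‖z‖ ^ 2 < D ^ 2) : ⟪f, z⟫ ^ 2 < (D + ⟪e, z⟫) ^ 2 := by
  nlinarith [inner_sq_add_inner_sq_le he hf z, sq_nonneg (⟪e, z⟫ + D / 2)]

end InnerProductSpace

section SigmaMin
variable {n : ℕ} {ι : Type*} [Fintype ι] (φ : ι → EuclideanSpace ℝ (Fin n))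

theorem sigmaMin_nonneg : 0 ≤ sigmaMin φ :=
  Real.sInf_nonneg (by rintro t ⟨v, -, rfl⟩; positivity)

theorem sigmaMin_mul_norm_le (w : EuclideanSpace ℝ ι) :
    sigmaMin φ * ‖w‖ ≤ ‖∑ j, w j • φ j‖ := by
  rcases eq_or_ne w 0 with rfl | hw
  · simp
  have hw' : 0 < ‖w‖ := norm_pos_iff.2 hw
  have hmem : ‖w‖⁻¹ * ‖∑ j, w j • φ j‖ ∈
      {t : ℝ | ∃ v : EuclideanSpace ℝ ι, ‖v‖ = 1 ∧ t = ‖∑ j, v j • φ j‖} := by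
    refine ⟨‖w‖⁻¹ • w, norm_smul_inv_norm hw, ?_⟩
    simp only [PiLp.smul_apply, smul_eq_mul, mul_smul, ← Finset.smul_sum, norm_smul,
      norm_inv, norm_norm]
  have := csInf_le ⟨0, by rintro t ⟨v, -, rfl⟩; positivity⟩ hmem
  rwa [le_inv_mul_iff₀ hw', mul_comm] at this

end SigmaMin

section LsResidual
variable {n m : ℕ} (φ : Fin m → EuclideanSpace ℝ (Fin n))

theorem lsResidual_eq_starProjection_orthogonal (y : EuclideanSpace ℝ (Fin n))
    (A : Finset (Fin m)) :
    lsResidual φ y A = (span ℝ (φ '' A))ᗮ.starProjection y := by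
  rw [lsResidual, starProjection_orthogonal_val, coe_orthogonalProjectionOnto_apply]

theorem lsResidual_mem_orthogonal (y : EuclideanSpace ℝ (Fin n)) (A : Finset (Fin m)) :
    lsResidual φ y A ∈ (span ℝ (φ '' A))ᗮ := by
  rw [lsResidual_eq_starProjection_orthogonal]; exact starProjection_apply_mem _ _

theorem lsResidual_insert (y : EuclideanSpace ℝ (Fin n)) (i : Fin m) (B : Finset (Fin m)) :
    lsResidual φ y (insert i B) =
      (ℝ ∙ lsResidual φ (φ i) B)ᗮ.starProjection (lsResidual φ y B) := by
  simp only [lsResidual_eq_starProjection_orthogonal, Finset.coe_insert, Set.image_insert_eq,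
    span_insert, sup_comm (ℝ ∙ φ i)]
  exact starProjection_orthogonal_sup_span_singleton _ _ _

theorem inner_lsResidual_lsResidual (v y : EuclideanSpace ℝ (Fin n)) (B : Finset (Fin m)) :
    ⟪lsResidual φ v B, lsResidual φ y B⟫ = ⟪lsResidual φ v B, y⟫ := by
  simp only [lsResidual_eq_starProjection_orthogonal]
  rw [← inner_starProjection_left_eq_right,
    starProjection_eq_self_iff.2 (starProjection_apply_mem _ _)]

theorem inner_lsResidual_self (i : Fin m) (B : Finset (Fin m)) :
    ⟪lsResidual φ (φ i) B, φ i⟫ = ‖lsResidual φ (φ i) B‖ ^ 2 := by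
  rw [← inner_lsResidual_lsResidual, real_inner_self_eq_norm_sq]

theorem norm_sq_lsResidual_eq_add (y : EuclideanSpace ℝ (Fin n)) (i : Fin m)
    (B : Finset (Fin m)) :
    ‖lsResidual φ y B‖ ^ 2 = ‖lsResidual φ y (insert i B)‖ ^ 2
      + ⟪‖lsResidual φ (φ i) B‖⁻¹ • lsResidual φ (φ i) B, y⟫ ^ 2 := by
  set u := lsResidual φ (φ i) B
  rw [lsResidual_insert, norm_sq_eq_add_norm_sq_starProjection (lsResidual φ y B) (ℝ ∙ u),
    add_comm, add_left_cancel_iff, starProjection_singleton, norm_smul, real_inner_smul_left,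
    inner_lsResidual_lsResidual]
  rcases eq_or_ne u 0 with hu | hu
  · simp [hu]
  · have : ‖u‖ ≠ 0 := norm_ne_zero_iff.2 hu
    simp only [Real.norm_eq_abs, RCLike.ofReal_real_eq_id, id_eq, abs_div, abs_pow, abs_norm]
    field_simp
    exact sq_abs _

theorem sigmaMin_mul_norm_le_norm_lsResidual (w : EuclideanSpace ℝ (Fin m))
    {B : Finset (Fin m)} (hw : ∀ l ∈ B, w l = 0) :
    sigmaMin φ * ‖w‖ ≤ ‖lsResidual φ (∑ l, w l • φ l) B‖ := by
  obtain ⟨c, hc, hcz⟩ := (Finsupp.mem_span_image_iff_linearCombination ℝ).1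
    (starProjection_apply_mem (span ℝ (φ '' B)) (∑ l, w l • φ l))
  have hdisj : ∀ l, w l = 0 ∨ c l = 0 := fun l =>
    (em (l ∈ B)).imp (hw l) fun hl => Finsupp.notMem_support_iff.1 fun hl' => hl (hc hl')
  have hnorm : ‖w‖ ≤ ‖w - WithLp.toLp 2 ⇑c‖ := by
    simp only [EuclideanSpace.norm_eq]
    gcongr with l
    rcases hdisj l with h | h <;> simp [h]
  calc sigmaMin φ * ‖w‖ ≤ sigmaMin φ * ‖w - WithLp.toLp 2 ⇑c‖ :=
        mul_le_mul_of_nonneg_left hnorm (sigmaMin_nonneg φ)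
    _ ≤ ‖∑ l, (w - WithLp.toLp 2 ⇑c) l • φ l‖ := sigmaMin_mul_norm_le φ _
    _ = ‖lsResidual φ (∑ l, w l • φ l) B‖ := by
        rw [lsResidual, coe_orthogonalProjectionOnto_apply, ← hcz,
          Finsupp.linearCombination_apply, Finsupp.sum_fintype _ _ (by simp)]
        simp [sub_smul, Finset.sum_sub_distrib]

theorem sigmaMin_le_norm_lsResidual {i : Fin m} {B : Finset (Fin m)} (hi : i ∉ B) :
    sigmaMin φ ≤ ‖lsResidual φ (φ i) B‖ := by
  have := sigmaMin_mul_norm_le_norm_lsResidual φ (EuclideanSpace.single i 1) (B := B)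
    (fun l hl => by simp [ne_of_mem_of_not_mem hl hi])
  simpa using this

theorem sq_sigmaMin_mul_le_norm_sq_smul_add_smul {i j : Fin m} {B : Finset (Fin m)}
    (hij : i ≠ j) (hi : i ∉ B) (hj : j ∉ B) (α β : ℝ) :
    sigmaMin φ ^ 2 * (α ^ 2 + β ^ 2) ≤
      ‖α • lsResidual φ (φ i) B + β • lsResidual φ (φ j) B‖ ^ 2 := by
  set w := EuclideanSpace.single i α + EuclideanSpace.single j β
  have hw : ∀ l ∈ B, w l = 0 := fun l hl => by
    simp [w, ne_of_mem_of_not_mem hl hi, ne_of_mem_of_not_mem hl hj]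
  have hsum : ∑ l, w l • φ l = α • φ i + β • φ j := by
    simp [w, add_smul, Finset.sum_add_distrib, ite_smul]
  have hnorm : ‖w‖ ^ 2 = α ^ 2 + β ^ 2 := by
    simp [w, EuclideanSpace.norm_sq_eq, Finset.sum_add_distrib,
      add_sq, ite_pow, Finset.sum_ite_eq', hij.symm]
  have := sigmaMin_mul_norm_le_norm_lsResidual φ w hw
  rw [hsum, lsResidual_eq_starProjection_orthogonal, map_add, map_smul, map_smul,
    ← lsResidual_eq_starProjection_orthogonal, ← lsResidual_eq_starProjection_orthogonal] at this
  rw [← hnorm, ← mul_pow]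
  exact pow_le_pow_left₀ (mul_nonneg (sigmaMin_nonneg φ) (norm_nonneg w)) this 2

end LsResidual

section Coherence
variable {n m : ℕ} {φ : Fin m → EuclideanSpace ℝ (Fin n)}

theorem abs_inner_lsResidual_le (hunit : ∀ j, ‖φ j‖ = 1) {i j : Fin m} {B : Finset (Fin m)}
    (hij : i ≠ j) (hi : i ∉ B) (hj : j ∉ B) :
    |⟪lsResidual φ (φ i) B, lsResidual φ (φ j) B⟫| ≤
      (1 - sigmaMin φ ^ 2) * (‖lsResidual φ (φ i) B‖ * ‖lsResidual φ (φ j) B‖) := by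
  set p := lsResidual φ (φ i) B
  set q := lsResidual φ (φ j) B
  set σ := sigmaMin φ
  have hnorm_le : ∀ l, ‖lsResidual φ (φ l) B‖ ≤ 1 := fun l => by
    rw [lsResidual_eq_starProjection_orthogonal, ← hunit l]
    exact norm_starProjection_apply_le _ _
  have hab : ‖p‖ * ‖q‖ ≤ 1 := mul_le_one₀ (hnorm_le i) (norm_nonneg q) (hnorm_le j)
  have hexp : ∀ t : ℝ, ‖‖q‖ • p + t • q‖ ^ 2 = 2 * ‖p‖ ^ 2 * ‖q‖ ^ 2 + 2 * t * ‖q‖ * ⟪p, q⟫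
      + (t ^ 2 - ‖p‖ ^ 2) * ‖q‖ ^ 2 := fun t => by
    rw [norm_add_sq_real, norm_smul, norm_smul, real_inner_smul_left, real_inner_smul_right,
      Real.norm_eq_abs, Real.norm_eq_abs, abs_norm, mul_pow, mul_pow, sq_abs]
    ring
  -- test the lower frame bound on `‖q‖ p ∓ ‖p‖ q`
  have hminus := sq_sigmaMin_mul_le_norm_sq_smul_add_smul φ hij hi hj ‖q‖ (-‖p‖)
  have hplus := sq_sigmaMin_mul_le_norm_sq_smul_add_smul φ hij hi hj ‖q‖ ‖p‖
  rw [hexp] at hminus hplus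
  have hcs := abs_real_inner_le_norm p q
  rcases (mul_nonneg (norm_nonneg p) (norm_nonneg q)).eq_or_lt with h0 | hpos
  · rw [← h0] at hcs ⊢; simpa using hcs
  · have hσ2 : σ ^ 2 * (2 * (‖p‖ * ‖q‖)) ≤ σ ^ 2 * (‖p‖ ^ 2 + ‖q‖ ^ 2) :=
      mul_le_mul_of_nonneg_left (by nlinarith [sq_nonneg (‖p‖ - ‖q‖)]) (sq_nonneg σ)
    have hc : |⟪p, q⟫| ≤ ‖p‖ * ‖q‖ - σ ^ 2 := by
      rw [abs_le]; constructor <;> nlinarith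
    nlinarith [sq_nonneg σ]

theorem abs_inner_lsResidual_erase_le (hunit : ∀ j, ‖φ j‖ = 1) (hσ : 0 < sigmaMin φ)
    {A : Finset (Fin m)} {i j : Fin m} (hij : i ≠ j) (hi : i ∈ A) (hj : j ∈ A) :
    |⟪lsResidual φ (φ i) (A.erase i), lsResidual φ (φ j) (A.erase j)⟫| ≤
      (1 - sigmaMin φ ^ 2) *
        (‖lsResidual φ (φ i) (A.erase i)‖ * ‖lsResidual φ (φ j) (A.erase j)‖) := by
  set V := (A.erase i).erase j
  have hAi : A.erase i = insert j V :=
    (Finset.insert_erase (Finset.mem_erase.2 ⟨hij.symm, hj⟩)).symm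
  have hAj : A.erase j = insert i V := by
    rw [show V = (A.erase j).erase i from Finset.erase_right_comm]
    exact (Finset.insert_erase (Finset.mem_erase.2 ⟨hij, hi⟩)).symm
  have hiV : i ∉ V := fun h => Finset.notMem_erase i A (Finset.mem_of_mem_erase h)
  have hjV : j ∉ V := Finset.notMem_erase j _
  rw [hAi, hAj, lsResidual_insert, lsResidual_insert]
  set p := lsResidual φ (φ i) V
  set q := lsResidual φ (φ j) V
  have hpq : 0 < ‖p‖ * ‖q‖ := mul_pos (hσ.trans_le (sigmaMin_le_norm_lsResidual φ hiV))
    (hσ.trans_le (sigmaMin_le_norm_lsResidual φ hjV))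
  refine le_of_mul_le_mul_right ?_ hpq
  rw [abs_inner_starProjection_orthogonal_singleton]
  calc |⟪p, q⟫| * (‖(ℝ ∙ q)ᗮ.starProjection p‖ * ‖(ℝ ∙ p)ᗮ.starProjection q‖)
      ≤ (1 - sigmaMin φ ^ 2) * (‖p‖ * ‖q‖) *
          (‖(ℝ ∙ q)ᗮ.starProjection p‖ * ‖(ℝ ∙ p)ᗮ.starProjection q‖) :=
        mul_le_mul_of_nonneg_right (abs_inner_lsResidual_le hunit hij hiV hjV) (by positivity)
    _ = _ := by ring

end Coherence

section Recovery
variable {n m : ℕ}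

theorem sum_smul_mem_span (φ : Fin m → EuclideanSpace ℝ (Fin n)) {s B : Finset (Fin m)}
    {x : Fin m → ℝ} (hx : ∀ l ∈ s, x l ≠ 0 → l ∈ B) : ∑ l ∈ s, x l • φ l ∈ span ℝ (φ '' B) :=
  sum_mem fun l hl => (em (x l = 0)).elim (fun h => by simp [h])
    fun h => smul_mem _ _ (subset_span ⟨l, hx l hl h, rfl⟩)

theorem inner_normalize_lsResidual_erase_sum (φ : Fin m → EuclideanSpace ℝ (Fin n))
    {A : Finset (Fin m)} {x : Fin m → ℝ} (hx : ∀ l, x l ≠ 0 → l ∈ A) (i : Fin m) :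
    ⟪‖lsResidual φ (φ i) (A.erase i)‖⁻¹ • lsResidual φ (φ i) (A.erase i), ∑ l, x l • φ l⟫ =
      x i * ‖lsResidual φ (φ i) (A.erase i)‖ := by
  have hrest : ∑ l ∈ Finset.univ.erase i, x l • φ l ∈ span ℝ (φ '' (A.erase i)) :=
    sum_smul_mem_span φ fun l hl hxl => Finset.mem_erase.2 ⟨Finset.ne_of_mem_erase hl, hx l hxl⟩
  rw [← Finset.add_sum_erase _ _ (Finset.mem_univ i), inner_add_right,
    inner_left_of_mem_orthogonal hrest (smul_mem _ _ (lsResidual_mem_orthogonal _ _ _)),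
    add_zero, real_inner_smul_left, real_inner_smul_right, inner_lsResidual_self φ]
  rcases eq_or_ne ‖lsResidual φ (φ i) (A.erase i)‖ 0 with h | h
  · simp [h]
  · field_simp

theorem norm_lsResidual_erase_lt {φ : Fin m → EuclideanSpace ℝ (Fin n)}
    (hunit : ∀ j, ‖φ j‖ = 1) (hσ : 0 < sigmaMin φ) {A : Finset (Fin m)} {x : Fin m → ℝ}
    (hx : ∀ l, x l ≠ 0 → l ∈ A) {i j : Fin m}
    (hi : i ∈ A) (hj : j ∈ A) (hij : i ≠ j) (hxj : x j = 0) (ε : EuclideanSpace ℝ (Fin n))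
    (hnoise : 2 * (2 - sigmaMin φ ^ 2) * ‖ε‖ ^ 2 < sigmaMin φ ^ 2 * x i ^ 2) :
    ‖lsResidual φ (∑ l, x l • φ l + ε) (A.erase j)‖ <
      ‖lsResidual φ (∑ l, x l • φ l + ε) (A.erase i)‖ := by
  set y := ∑ l, x l • φ l + ε
  set σ := sigmaMin φ
  set ui := lsResidual φ (φ i) (A.erase i)
  set uj := lsResidual φ (φ j) (A.erase j)
  have hui : σ ≤ ‖ui‖ := sigmaMin_le_norm_lsResidual φ (Finset.notMem_erase i A)
  have huj : σ ≤ ‖uj‖ := sigmaMin_le_norm_lsResidual φ (Finset.notMem_erase j A)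
  have hui0 : ‖ui‖ ≠ 0 := (hσ.trans_le hui).ne'
  have huj0 : ‖uj‖ ≠ 0 := (hσ.trans_le huj).ne'
  have he : ‖‖ui‖⁻¹ • ui‖ = 1 := norm_smul_inv_norm (norm_ne_zero_iff.1 hui0)
  have hf : ‖‖uj‖⁻¹ • uj‖ = 1 := norm_smul_inv_norm (norm_ne_zero_iff.1 huj0)
  have hef : |⟪‖ui‖⁻¹ • ui, ‖uj‖⁻¹ • uj⟫| ≤ 1 - σ ^ 2 := by
    rw [real_inner_smul_left, real_inner_smul_right, abs_mul, abs_mul, abs_inv, abs_inv,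
      abs_norm, abs_norm, ← mul_assoc, ← mul_inv, inv_mul_le_iff₀ (by positivity), mul_comm]
    exact abs_inner_lsResidual_erase_le hunit hσ hij hi hj
  have hey : ⟪‖ui‖⁻¹ • ui, y⟫ = x i * ‖ui‖ + ⟪‖ui‖⁻¹ • ui, ε⟫ := by
    rw [inner_add_right, inner_normalize_lsResidual_erase_sum φ hx]
  have hfy : ⟪‖uj‖⁻¹ • uj, y⟫ = ⟪‖uj‖⁻¹ • uj, ε⟫ := by
    rw [inner_add_right, inner_normalize_lsResidual_erase_sum φ hx, hxj, zero_mul, zero_add]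
  have hD : 2 * (1 + |⟪‖ui‖⁻¹ • ui, ‖uj‖⁻¹ • uj⟫|) * ‖ε‖ ^ 2 < (x i * ‖ui‖) ^ 2 :=
    calc 2 * (1 + |⟪‖ui‖⁻¹ • ui, ‖uj‖⁻¹ • uj⟫|) * ‖ε‖ ^ 2 ≤ 2 * (2 - σ ^ 2) * ‖ε‖ ^ 2 := by
          gcongr; linarith
      _ < σ ^ 2 * x i ^ 2 := hnoise
      _ ≤ (x i * ‖ui‖) ^ 2 := by
          rw [mul_pow, mul_comm]; gcongr
  have hlt := sq_inner_lt_sq_add_inner he hf hD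
  rw [← hey, ← hfy] at hlt
  have hri := norm_sq_lsResidual_eq_add φ y i (A.erase i)
  have hrj := norm_sq_lsResidual_eq_add φ y j (A.erase j)
  rw [Finset.insert_erase hi] at hri
  rw [Finset.insert_erase hj] at hrj
  exact lt_of_pow_lt_pow_left₀ 2 (norm_nonneg _) (by rw [hri, hrj]; linarith)

end Recovery

theorem mul_sq_lt_sq_of_lt_div_sqrt {e c s : ℝ} (he : 0 ≤ e) (h : e < c / √s) :
    s * e ^ 2 < c ^ 2 := by
  -- if `√s = 0` then `c / √s = 0`, contradicting `0 ≤ e < c / √s`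
  have hs : 0 < √s := (Real.sqrt_nonneg s).lt_of_ne' fun h0 => by simp [h0] at h; linarith
  rw [lt_div_iff₀ hs] at h
  calc s * e ^ 2 = (e * √s) ^ 2 := by
        rw [mul_pow, Real.sq_sqrt (Real.sqrt_pos.1 hs).le, mul_comm]
    _ < c ^ 2 := pow_lt_pow_left₀ h (by positivity) two_ne_zero

section Run
variable {n m : ℕ} {φ : Fin m → EuclideanSpace ℝ (Fin n)} {y : EuclideanSpace ℝ (Fin n)}
  {S : Finset (Fin m)}

theorem BRStep.subset_and_card_of_ssubset
    (hcmp : ∀ A, S ⊆ A → ∀ i ∈ S, ∀ j ∈ A, j ∉ S →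
      ‖lsResidual φ y (A.erase j)‖ < ‖lsResidual φ y (A.erase i)‖)
    {A B : Finset (Fin m)} (hSA : S ⊂ A) (h : BRStep φ y A B) :
    S ⊆ B ∧ B.card = A.card - 1 := by
  obtain ⟨i, hiA, rfl, hmin⟩ := h
  obtain ⟨j, hjA, hjS⟩ := Finset.exists_of_ssubset hSA
  have hiS : i ∉ S := fun hiS => (hmin j hjA).not_gt (hcmp A hSA.subset i hiS j hjA hjS)
  exact ⟨fun l hl => Finset.mem_erase.2 ⟨ne_of_mem_of_not_mem hl hiS, hSA.subset hl⟩,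
    Finset.card_erase_of_mem hiA⟩

theorem BRStep.run_eq_of_forall_lt
    (hcmp : ∀ A, S ⊆ A → ∀ i ∈ S, ∀ j ∈ A, j ∉ S →
      ‖lsResidual φ y (A.erase j)‖ < ‖lsResidual φ y (A.erase i)‖)
    (A : ℕ → Finset (Fin m)) (hA0 : A 0 = Finset.univ)
    (hstep : ∀ t < m - S.card, BRStep φ y (A t) (A (t + 1))) : A (m - S.card) = S := by
  have hSm : S.card ≤ m := by simpa using Finset.card_le_univ S
  have hinv : ∀ t ≤ m - S.card, S ⊆ A t ∧ (A t).card = m - t := by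
    intro t ht
    induction t with
    | zero => simp [hA0]
    | succ t ih =>
      obtain ⟨hSA, hcard⟩ := ih (by omega)
      have hSA' : S ⊂ A t := hSA.ssubset_of_ne (by rintro rfl; omega)
      obtain ⟨hS, hcard'⟩ := (hstep t (by omega)).subset_and_card_of_ssubset hcmp hSA'
      exact ⟨hS, by omega⟩
  obtain ⟨hS, hcard⟩ := hinv (m - S.card) le_rfl
  exact (Finset.eq_of_subset_of_card_le hS (by omega)).symm

end Run

theorem backward_regression_recovery_general {n m k : ℕ}
    (φ : Fin m → EuclideanSpace ℝ (Fin n))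
    (hunit : ∀ j, ‖φ j‖ = 1)
    (x : Fin m → ℝ) (S : Finset (Fin m)) (hsupp : ∀ i, x i ≠ 0 ↔ i ∈ S)
    (hcard : S.card = k) (hSne : S.Nonempty)
    (ε : EuclideanSpace ℝ (Fin n)) (y : EuclideanSpace ℝ (Fin n))
    (hy : y = (∑ j, x j • φ j) + ε)
    (hnoise : sigmaMin φ / Real.sqrt (2 * (2 - sigmaMin φ ^ 2)) *
        (S.inf' hSne fun i => |x i|) > ‖ε‖) :
    ∀ A : ℕ → Finset (Fin m), A 0 = Finset.univ →
      (∀ t < m - k, BRStep φ y (A t) (A (t+1))) → A (m - k) = S := by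
  subst hcard hy
  set σ := sigmaMin φ
  set α := S.inf' hSne fun i => |x i|
  have hε := norm_nonneg ε
  rw [gt_iff_lt, div_mul_eq_mul_div] at hnoise
  have hσ : 0 < σ := (sigmaMin_nonneg φ).lt_of_ne' fun h => by
    rw [show σ = 0 from h, zero_mul, zero_div] at hnoise; linarith
  have hnoise_sq : 2 * (2 - σ ^ 2) * ‖ε‖ ^ 2 < σ ^ 2 * α ^ 2 := by
    rw [← mul_pow]; exact mul_sq_lt_sq_of_lt_div_sqrt hε hnoise
  refine BRStep.run_eq_of_forall_lt fun A hSA i hi j hjA hjS => ?_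
  refine norm_lsResidual_erase_lt hunit hσ (fun l hl => hSA ((hsupp l).1 hl)) (hSA hi) hjA
    (ne_of_mem_of_not_mem hi hjS) (not_not.1 fun h => hjS ((hsupp j).1 h)) ε
    (hnoise_sq.trans_le ?_)
  have : α ≤ |x i| := Finset.inf'_le _ hi
  rw [← sq_abs (x i)]
  gcongr
  exact Finset.le_inf' _ _ fun l _ => abs_nonneg (x l)

/-- Theorem 4 of the paper: if `Φ` has full column rank, unit-norm columns,
and `(σ_min(Φ)/√(2(2−σ_min(Φ)²))) min_{i∈S}|x_i| > ‖ε‖₂`, Backward Regression started from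
the full active set recovers the support `S` in `m − k` iterations, for every
tie-breaking. -/
theorem backward_regression_recovery {n m k : ℕ}
    (φ : Fin m → EuclideanSpace ℝ (Fin n)) (hrank : LinearIndependent ℝ φ)
    (hunit : ∀ j, ‖φ j‖ = 1)
    (x : Fin m → ℝ) (S : Finset (Fin m)) (hsupp : ∀ i, x i ≠ 0 ↔ i ∈ S)
    (hcard : S.card = k) (hSne : S.Nonempty)
    (ε : EuclideanSpace ℝ (Fin n)) (y : EuclideanSpace ℝ (Fin n))
    (hy : y = (∑ j, x j • φ j) + ε)
    (hnoise : sigmaMin φ / Real.sqrt (2 * (2 - sigmaMin φ ^ 2)) *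
        (S.inf' hSne fun i => |x i|) > ‖ε‖) :
    ∀ A : ℕ → Finset (Fin m), A 0 = Finset.univ →
      (∀ t < m - k, BRStep φ y (A t) (A (t+1))) → A (m - k) = S :=
  backward_regression_recovery_general φ hunit x S hsupp hcard hSne ε y hy hnoise
end
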